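/- Main theorem: Let n be a k-digit natural number with 10 ∤ n and n ≠ r(n). Then there exists a natural number ω > 0 such that for every c ≥ 1, n·ρ_{c,k} is v-palindromic if and only if n·ρ_{c+ω,k} is v-palindromic. -/

import Mathlib

/-- `v n` is the sum of the primes and of the exponents greater than 1
in the prime factorization of `n` (exponents equal to 1 are omitted). -/
def v (n : ℕ) : ℕ :=
  ∑ p ∈ n.primeFactors, (p + if n.factorization p = 1 then 0 else n.factorization p)

/-- decimal digit reversal -/
def r (n : ℕ) : ℕ := Nat.ofDigits 10 (Nat.digits 10 n).reverse

/-- `n` is v-palindromic if `10 ∤ n`, `n ≠ r n` and `v n = v (r n)`. -/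
def VPalindromic (n : ℕ) : Prop := ¬ (10 ∣ n) ∧ n ≠ r n ∧ v n = v (r n)

/-- `ρ_{c,k}` -/
def rho (c k : ℕ) : ℕ := ∑ i ∈ Finset.range c, 10 ^ (k * i)

/-- `φ_{p,δ}(α) = v(p^{α+δ}) - v(p^α)` as an integer. -/
def phi (p δ α : ℕ) : ℤ := (v (p ^ (α + δ)) : ℤ) - (v (p ^ α) : ℤ)

/-!
Since `n` has exactly `k` digits, the decimal expansion of `n ρ_{c,k}` is `c` copies of that of `n`,
so `r (n ρ_{c,k}) = r n * ρ_{c,k}`; as `ρ_{c,k} ≡ 1 (mod 10)`, the number `n ρ_{c,k}` is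
v-palindromic iff `v (n ρ_{c,k}) = v (r n * ρ_{c,k})`. In the difference of these two values only
the primes `p ∣ n r(n)` contribute, and each contributes an amount depending only on
`min (ν_p ρ_{c,k}) 2`. For `p ∣ 10` this is `0`; for the other `p` it depends only on
`ρ_{c,k} mod p²`. Choosing `ω` with `∏ p² ∣ ρ_{ω,k}` (possible by Euler's theorem) gives
`ρ_{c+ω,k} = ρ_{c,k} + 10^{kc} ρ_{ω,k} ≡ ρ_{c,k}` modulo every such `p²`.
-/

lemma rho_succ (c k : ℕ) : rho (c + 1) k = rho c k + 10 ^ (k * c) := by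
  simp [rho, Finset.sum_range_succ]

lemma rho_succ' (c k : ℕ) : rho (c + 1) k = 1 + 10 ^ k * rho c k := by
  rw [rho, Finset.sum_range_succ', add_comm, rho, Finset.mul_sum]
  simp [Nat.mul_succ, pow_add, mul_comm]

lemma rho_add (c ω k : ℕ) : rho (c + ω) k = rho c k + 10 ^ (k * c) * rho ω k := by
  simp only [rho, Finset.sum_range_add, Finset.mul_sum, ← pow_add, ← Nat.mul_add]

lemma rho_mul_add_one (ω k : ℕ) : rho ω k * (10 ^ k - 1) + 1 = 10 ^ (k * ω) := by
  have h := geom_sum_mul_add (10 ^ k - 1) ω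
  rw [Nat.sub_add_cancel (Nat.one_le_pow _ _ (by norm_num)), ← pow_mul] at h
  simpa only [rho, pow_mul] using h

lemma rho_pos (k : ℕ) {c : ℕ} (hc : 0 < c) : 0 < rho c k := by
  obtain ⟨c, rfl⟩ := Nat.exists_eq_add_of_le' hc
  rw [rho_succ']
  omega

lemma rho_mod_ten {c k : ℕ} (hk : 0 < k) (hc : 0 < c) : rho c k % 10 = 1 := by
  obtain ⟨c, rfl⟩ := Nat.exists_eq_add_of_le' hc
  obtain ⟨k, rfl⟩ := Nat.exists_eq_add_of_le' hk
  rw [rho_succ', pow_succ', mul_assoc, Nat.add_mul_mod_self_left]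

lemma coprime_rho_ten {c k : ℕ} (hk : 0 < k) (hc : 0 < c) : (rho c k).Coprime 10 := by
  rw [Nat.Coprime, Nat.gcd_comm, Nat.gcd_rec, rho_mod_ten hk hc, Nat.gcd_one_left]

/-- Euler's theorem modulo `N * (10 ^ k - 1)`, since `ρ_{ω,k} * (10 ^ k - 1) = 10 ^ (k ω) - 1`. -/
lemma exists_dvd_rho {N k : ℕ} (hk : 0 < k) (hN : N.Coprime 10) :
    ∃ ω, 0 < ω ∧ N ∣ rho ω k := by
  set t := 10 ^ k - 1
  have ht : 0 < t := Nat.sub_pos_of_lt (Nat.one_lt_pow hk.ne' (by norm_num))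
  have hcop : (10 ^ k).Coprime (N * t) := by
    refine Nat.Coprime.mul_right (hN.symm.pow_left k) ?_
    rw [show 10 ^ k = 1 + t by omega]
    exact Nat.coprime_add_self_left.2 (Nat.coprime_one_left t)
  have hN0 : N ≠ 0 := by rintro rfl; simp at hN
  refine ⟨Nat.totient (N * t), Nat.totient_pos.2 (by positivity), ?_⟩
  have h := Nat.ModEq.pow_totient hcop
  rw [← pow_mul, ← rho_mul_add_one, ← zero_add 1] at h
  exact Nat.dvd_of_mul_dvd_mul_right ht
    (Nat.modEq_zero_iff_dvd.1 (Nat.ModEq.add_right_cancel' 1 h))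

lemma digits_mul_rho_succ {n k : ℕ} (hn : (Nat.digits 10 n).length = k) (c : ℕ) :
    Nat.digits 10 (n * rho (c + 1) k) = Nat.digits 10 n ++ Nat.digits 10 (n * rho c k) := by
  rw [Nat.digits_append_digits (by norm_num), hn, rho_succ', mul_add, mul_one, mul_left_comm]

lemma length_digits_mul_rho {n k : ℕ} (hn : (Nat.digits 10 n).length = k) (c : ℕ) :
    (Nat.digits 10 (n * rho c k)).length = k * c := by
  induction c with
  | zero => simp [rho]
  | succ c ih => rw [digits_mul_rho_succ hn, List.length_append, ih, hn]; ring

lemma r_mul_rho {n k : ℕ} (hn : (Nat.digits 10 n).length = k) (c : ℕ) :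
    r (n * rho c k) = r n * rho c k := by
  induction c with
  | zero => simp [r, rho]
  | succ c ih =>
    rw [r, digits_mul_rho_succ hn, List.reverse_append, Nat.ofDigits_append, List.length_reverse,
      length_digits_mul_rho hn, ← r, ← r, ih, rho_succ]
    ring

lemma r_ne_zero {n : ℕ} (h10 : ¬ 10 ∣ n) : r n ≠ 0 := by
  have hn0 : n ≠ 0 := by rintro rfl; exact h10 (dvd_zero 10)
  have hlast : n % 10 ≠ 0 := fun h => h10 (Nat.dvd_of_mod_eq_zero h)
  rw [r, Nat.digits_def' (by norm_num) (Nat.pos_of_ne_zero hn0), List.reverse_cons,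
    Nat.ofDigits_append, Nat.ofDigits_singleton]
  simp [hlast]

lemma vPalindromic_mul_rho_iff {n k c : ℕ} (hk : 0 < k) (hn : (Nat.digits 10 n).length = k)
    (h10 : ¬ 10 ∣ n) (hnr : n ≠ r n) (hc : 0 < c) :
    VPalindromic (n * rho c k) ↔ v (n * rho c k) = v (r n * rho c k) := by
  rw [VPalindromic, r_mul_rho hn]
  have hmod : n * rho c k ≡ n * 1 [MOD 10] := Nat.ModEq.mul_left n (rho_mod_ten hk hc)
  refine ⟨fun h => h.2.2, fun hv => ⟨?_, fun h => hnr (Nat.eq_of_mul_eq_mul_right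
    (rho_pos k hc) h), hv⟩⟩
  rwa [hmod.dvd_iff dvd_rfl, mul_one]

lemma min_factorization_eq_of_modEq {p j x y : ℕ} (hp : p.Prime) (hx : x ≠ 0) (hy : y ≠ 0)
    (h : x ≡ y [MOD p ^ j]) : min (x.factorization p) j = min (y.factorization p) j := by
  have key : ∀ {x y}, x ≠ 0 → y ≠ 0 → x ≡ y [MOD p ^ j] →
      min (x.factorization p) j ≤ min (y.factorization p) j := by
    intro x y hx hy h
    have hdvd : p ^ min (x.factorization p) j ∣ x :=
      (hp.pow_dvd_iff_le_factorization hx).2 (min_le_left _ _)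
    rw [h.dvd_iff (pow_dvd_pow p (min_le_right _ _)), hp.pow_dvd_iff_le_factorization hy] at hdvd
    exact le_min hdvd (min_le_right _ _)
  exact (key hx hy h).antisymm (key hy hx h.symm)

lemma min_factorization_rho_add_eq {p c ω k : ℕ} (hp : p.Prime) (hk : 0 < k) (hc : 0 < c)
    (hω : ¬ p ∣ 10 → p ^ 2 ∣ rho ω k) :
    min ((rho c k).factorization p) 2 = min ((rho (c + ω) k).factorization p) 2 := by
  by_cases hp10 : p ∣ 10
  · have hndvd : ∀ {d}, 0 < d → ¬ p ∣ rho d k := fun hd h =>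
      hp.ne_one (Nat.eq_one_of_dvd_coprimes (coprime_rho_ten hk hd) h hp10)
    rw [Nat.factorization_eq_zero_of_not_dvd (hndvd hc),
      Nat.factorization_eq_zero_of_not_dvd (hndvd (by omega))]
  · refine min_factorization_eq_of_modEq hp (rho_pos k hc).ne' (rho_pos k (by omega)).ne' ?_
    rw [rho_add]
    simpa using ((Nat.modEq_zero_iff_dvd.2 (dvd_mul_of_dvd_right (hω hp10) _)).add_left
      (rho c k)).symm

/-- The contribution of `p ^ α` to `v`. -/
def vTerm (p α : ℕ) : ℕ := if α = 0 then 0 else p + if α = 1 then 0 else α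

lemma v_eq_sum_vTerm {x : ℕ} {T : Finset ℕ} (hT : x.primeFactors ⊆ T) :
    v x = ∑ p ∈ T, vTerm p (x.factorization p) := by
  rw [v, ← Finset.sum_subset hT fun p _ hp => ?_]
  · refine Finset.sum_congr rfl fun p hp => ?_
    have : x.factorization p ≠ 0 := by
      rwa [← Finsupp.mem_support_iff, Nat.support_factorization]
    simp [vTerm, this]
  · rw [← Nat.support_factorization, Finsupp.notMem_support_iff] at hp
    simp [vTerm, hp]

/-- `vTerm p` is affine on exponents `≥ 2`, so shifting two exponents by `e` changes their
difference only through `min e 2`. -/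
lemma vTerm_add_add_vTerm_add (p a b : ℕ) {e e' : ℕ} (h : min e 2 = min e' 2) :
    vTerm p (a + e) + vTerm p (b + e') = vTerm p (a + e') + vTerm p (b + e) := by
  unfold vTerm
  split_ifs <;> omega

lemma v_mul_eq_v_mul_iff {x y ρ ρ' : ℕ} (hx : x ≠ 0) (hy : y ≠ 0) (hρ : ρ ≠ 0) (hρ' : ρ' ≠ 0)
    (h : ∀ p, p.Prime → p ∣ x * y → min (ρ.factorization p) 2 = min (ρ'.factorization p) 2) :
    v (x * ρ) = v (y * ρ) ↔ v (x * ρ') = v (y * ρ') := by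
  set T := (x * y * (ρ * ρ')).primeFactors
  have hT : ∀ a b, a * b ∣ x * y * (ρ * ρ') → (a * b).primeFactors ⊆ T :=
    fun a b hab => Nat.primeFactors_mono hab (by positivity)
  have key : v (x * ρ) + v (y * ρ') = v (x * ρ') + v (y * ρ) := by
    rw [v_eq_sum_vTerm (hT x ρ ⟨y * ρ', by ring⟩), v_eq_sum_vTerm (hT y ρ' ⟨x * ρ, by ring⟩),
      v_eq_sum_vTerm (hT x ρ' ⟨y * ρ, by ring⟩), v_eq_sum_vTerm (hT y ρ ⟨x * ρ', by ring⟩),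
      ← Finset.sum_add_distrib, ← Finset.sum_add_distrib]
    refine Finset.sum_congr rfl fun p hp => ?_
    simp only [Nat.factorization_mul hx hρ, Nat.factorization_mul hy hρ',
      Nat.factorization_mul hx hρ', Nat.factorization_mul hy hρ, Finsupp.add_apply]
    by_cases hpxy : p ∣ x * y
    · exact vTerm_add_add_vTerm_add _ _ _ (h p (Nat.prime_of_mem_primeFactors hp) hpxy)
    · rw [Nat.factorization_eq_zero_of_not_dvd fun h => hpxy (h.mul_right y),
        Nat.factorization_eq_zero_of_not_dvd fun h => hpxy (h.mul_left x), add_comm]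
  omega

theorem stmt15 (n k : ℕ) (hk : 1 ≤ k) (h1 : 10 ^ (k - 1) ≤ n) (h2 : n < 10 ^ k)
    (h10 : ¬ (10 ∣ n)) (hnr : n ≠ r n) :
    ∃ ω : ℕ, 0 < ω ∧ ∀ c : ℕ, 1 ≤ c →
      (VPalindromic (n * rho c k) ↔ VPalindromic (n * rho (c + ω) k)) := by
  have hlen : (Nat.digits 10 n).length = k := by
    have := (Nat.digits_length_le_iff (by norm_num) n).2 h2
    have := (Nat.lt_digits_length_iff (by norm_num) n).2 h1
    omega
  have hn0 : n ≠ 0 := by rintro rfl; exact h10 (dvd_zero 10)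
  set P := (n * r n).primeFactors.filter (¬ · ∣ 10)
  have hP : (∏ p ∈ P, p ^ 2).Coprime 10 := Nat.Coprime.prod_left fun p hp =>
    have ⟨hpnm, hp10⟩ := Finset.mem_filter.1 hp
    ((Nat.prime_of_mem_primeFactors hpnm).coprime_iff_not_dvd.2 hp10).pow_left 2
  obtain ⟨ω, hω, hPω⟩ := exists_dvd_rho hk hP
  refine ⟨ω, hω, fun c hc => ?_⟩
  rw [vPalindromic_mul_rho_iff hk hlen h10 hnr hc,
    vPalindromic_mul_rho_iff hk hlen h10 hnr (by omega)]
  refine v_mul_eq_v_mul_iff hn0 (r_ne_zero h10) (rho_pos k hc).ne' (rho_pos k (by omega)).ne'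
    fun p hp hpnm => min_factorization_rho_add_eq hp hk hc fun hp10 => ?_
  have hpP : p ∈ P :=
    Finset.mem_filter.2 ⟨Nat.mem_primeFactors.2 ⟨hp, hpnm, mul_ne_zero hn0 (r_ne_zero h10)⟩, hp10⟩
  exact (Finset.dvd_prod_of_mem (· ^ 2) hpP).trans hPω
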